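/- arXiv:1712.06160 — 2 statements merged into one kernel-verified Lean document; each statement's English description precedes it below -/
import Mathlib

section
/- Let $X_1,\ldots,X_n$ be i.i.d. random variables taking values in a measurable space $\mathcal{X}$, let $h:\mathcal{X}^m\to\mathbb{R}$ be a bounded measurable kernel of $m\geq 2$ variables with $n\geq m$, let $m_h = E\,h(X_1,\ldots,X_m)$, and let $k=\lfloor n/m\rfloor$. Then for every $t>0$, $P\{|U_n(h)-m_h|\geq t\} \leq 2\exp\left(-\frac{t^2\,\lfloor n/m\rfloor}{2\|h\|_\infty^2}\right)$, where $\|h\|_\infty$ is the essential supremum bound of $|h|$. -/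
open MeasureTheory ProbabilityTheory Real

/-- The U-statistic of order `m` with kernel `h` evaluated on the data `x`:
`U_n(h) = ((n-m)!/n!) ∑_{(i₁,…,i_m) distinct} h(x_{i₁},…,x_{i_m})`,
where the sum ranges over all injections `Fin m ↪ Fin n` (i.e. all `m`-tuples of
distinct indices). -/
noncomputable def Ustat {𝒳 : Type*} {m n : ℕ} (h : (Fin m → 𝒳) → ℝ) (x : Fin n → 𝒳) : ℝ :=
  (((n - m).factorial : ℝ) / (n.factorial : ℝ)) * ∑ ι : Fin m ↪ Fin n, h fun j => x (ι j)

/-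
Following Hoeffding (1963), with `k = ⌊n/m⌋` the U-statistic is the average, over all permutations
`σ` of the indices, of the mean of the kernel over `k` disjoint blocks of `m` indices relabelled by
`σ`. For fixed `σ` these `k` kernel values are independent, bounded by `C` and have mean `m_h`, so
by Hoeffding's lemma their centred mean is sub-Gaussian with variance proxy `C² / k`. By convexity
of `exp`, an average of sub-Gaussian variables with a common proxy has the same proxy, although they
are not independent; the Chernoff bound on both tails then gives the claim.
-/

open Function

theorem MulAction.card_nsmul_sum_smul {G X M : Type*} [Group G] [MulAction G X]
    [MulAction.IsPretransitive G X] [Fintype G] [Fintype X] [AddCommMonoid M] (x : X) (F : X → M) :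
    Fintype.card X • ∑ g : G, F (g • x) = Fintype.card G • ∑ y, F y := by
  have hconst : ∀ y : X, ∑ g : G, F (g • y) = ∑ g : G, F (g • x) := by
    intro y
    obtain ⟨τ, rfl⟩ := MulAction.exists_smul_eq G x y
    simp_rw [smul_smul]
    exact Fintype.sum_equiv (Equiv.mulRight τ) _ _ fun _ => rfl
  calc Fintype.card X • ∑ g : G, F (g • x) = ∑ y : X, ∑ g : G, F (g • y) := by
        simp only [hconst, Finset.sum_const, Finset.card_univ]
    _ = ∑ g : G, ∑ y : X, F (g • y) := Finset.sum_comm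
    _ = ∑ _g : G, ∑ y, F y :=
        Finset.sum_congr rfl fun g _ => Equiv.sum_comp (MulAction.toPerm g) F
    _ = Fintype.card G • ∑ y, F y := by rw [Finset.sum_const, Finset.card_univ]

theorem ustat_eq_average_perm {𝒳 : Type*} {m n : ℕ} (e : Fin m ↪ Fin n) (h : (Fin m → 𝒳) → ℝ)
    (x : Fin n → 𝒳) :
    Ustat h x = (n.factorial : ℝ)⁻¹ * ∑ σ : Equiv.Perm (Fin n), h fun j => x (σ (e j)) := by
  have : MulAction.IsPretransitive (Equiv.Perm (Fin n)) (Fin m ↪ Fin n) :=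
    ⟨Equiv.Perm.exists_smul_eq_embedding⟩
  have hle : m ≤ n := by simpa using Fintype.card_le_of_embedding e
  have hcount := MulAction.card_nsmul_sum_smul (G := Equiv.Perm (Fin n)) e
    fun ι : Fin m ↪ Fin n => h fun j => x (ι j)
  simp only [Fintype.card_embedding_eq, Fintype.card_perm, Fintype.card_fin, nsmul_eq_mul,
    Embedding.smul_apply, Equiv.Perm.smul_def, ← Nat.factorial_mul_descFactorial hle] at hcount
  have hpos : (0 : ℝ) < n.descFactorial m := by exact_mod_cast Nat.descFactorial_pos.mpr hle
  rw [Ustat, ← Nat.factorial_mul_descFactorial hle]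
  push_cast at hcount ⊢
  have hsum : ∑ σ : Equiv.Perm (Fin n), h (fun j => x (σ (e j)))
      = ((n - m).factorial : ℝ) * ∑ ι : Fin m ↪ Fin n, h fun j => x (ι j) := by
    refine mul_left_cancel₀ hpos.ne' ?_
    rw [hcount]
    ring
  rw [hsum]
  field_simp

theorem ustat_sub_eq_average_perm_blocks {𝒳 : Type*} {k m n : ℕ} (hk : k ≠ 0)
    (J : Fin k × Fin m ↪ Fin n) (h : (Fin m → 𝒳) → ℝ) (x : Fin n → 𝒳) (c : ℝ) :
    Ustat h x - c = (n.factorial : ℝ)⁻¹ * ∑ σ : Equiv.Perm (Fin n),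
      (k : ℝ)⁻¹ * ∑ i : Fin k, (h (fun j => x (σ (J (i, j)))) - c) := by
  have hblock (i : Fin k) := ustat_eq_average_perm ((Embedding.sectR i (Fin m)).trans J) h x
  simp only [Embedding.trans_apply, Embedding.sectR_apply] at hblock
  have hn : (n.factorial : ℝ) ≠ 0 := by positivity
  have hk' : (k : ℝ) ≠ 0 := by exact_mod_cast hk
  calc Ustat h x - c = (k : ℝ)⁻¹ * ∑ _i : Fin k, (Ustat h x - c) := by
        rw [Finset.sum_const, Finset.card_univ, Fintype.card_fin, nsmul_eq_mul]
        field_simp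
    _ = (k : ℝ)⁻¹ * ∑ i : Fin k, (n.factorial : ℝ)⁻¹ * ∑ σ : Equiv.Perm (Fin n),
          (h (fun j => x (σ (J (i, j)))) - c) := by
        congr 1
        refine Finset.sum_congr rfl fun i _ => ?_
        rw [hblock i, Finset.sum_sub_distrib, Finset.sum_const, Finset.card_univ,
          Fintype.card_perm, Fintype.card_fin, nsmul_eq_mul]
        field_simp
    _ = _ := by
        simp only [Finset.mul_sum]
        rw [Finset.sum_comm]
        exact Finset.sum_congr rfl fun _ _ => Finset.sum_congr rfl fun _ _ => by ring

namespace ProbabilityTheory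

variable {Ω : Type*} [MeasurableSpace Ω] {μ : Measure Ω}

theorem iIndepFun.curry {ι κ 𝒳 : Type*} [MeasurableSpace 𝒳] {Y : ι × κ → Ω → 𝒳}
    (hY : ∀ p, Measurable (Y p)) (h : iIndepFun Y μ) :
    iIndepFun (fun i ω j => Y (i, j) ω) μ := by
  have := h.isProbabilityMeasure
  have (p : ι × κ) : IsProbabilityMeasure (μ.map (Y p)) :=
    Measure.isProbabilityMeasure_map (hY p).aemeasurable
  rw [iIndepFun_iff_map_fun_eq_infinitePi_map (by fun_prop)]
  have hrow (i : ι) :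
      μ.map (fun ω j => Y (i, j) ω) = Measure.infinitePi fun j => μ.map (Y (i, j)) :=
    (h.precomp (Prod.mk_right_injective i)).map_fun_eq_infinitePi_map fun j => hY (i, j)
  simp_rw [hrow]
  rw [← Measure.infinitePi_map_curry (fun i j => μ.map (Y (i, j))),
    ← h.map_fun_eq_infinitePi_map hY, Measure.map_map (by fun_prop) (by fun_prop)]
  rfl

theorem iIndepFun.identDistrib_precomp {α β 𝒳 : Type*} [Fintype α] [MeasurableSpace 𝒳]
    {X : β → Ω → 𝒳} (hX : ∀ b, Measurable (X b)) (hind : iIndepFun X μ)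
    (hid : ∀ b b', IdentDistrib (X b) (X b') μ μ) {ι κ : α → β} (hι : Injective ι)
    (hκ : Injective κ) :
    IdentDistrib (fun ω a => X (ι a) ω) (fun ω a => X (κ a) ω) μ μ where
  aemeasurable_fst := by fun_prop
  aemeasurable_snd := by fun_prop
  map_eq := by
    rw [(hind.precomp hι).map_fun_eq_pi_map fun a => (hX _).aemeasurable,
      (hind.precomp hκ).map_fun_eq_pi_map fun a => (hX _).aemeasurable]
    exact congrArg Measure.pi (funext fun a => (hid _ _).map_eq)

namespace HasSubgaussianMGF

variable {c : NNReal}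

theorem average {ι : Type*} [Fintype ι] [Nonempty ι] {X : ι → Ω → ℝ}
    (h : ∀ i, HasSubgaussianMGF (X i) c μ) :
    HasSubgaussianMGF (fun ω => (Fintype.card ι : ℝ)⁻¹ * ∑ i, X i ω) c μ := by
  set w : ℝ := (Fintype.card ι : ℝ)⁻¹
  have hw : ∑ _i : ι, w = 1 := by simp [w]
  have hjensen (t : ℝ) (ω : Ω) :
      exp (t * (w * ∑ i, X i ω)) ≤ ∑ i, w * exp (t * X i ω) := by
    have := convexOn_exp.map_sum_le (t := Finset.univ) (w := fun _ => w)
      (p := fun i => t * X i ω) (fun _ _ => by positivity) hw (fun _ _ => Set.mem_univ _)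
    simpa [Finset.mul_sum, mul_left_comm t w] using this
  have hint (t : ℝ) : Integrable (fun ω => ∑ i, w * exp (t * X i ω)) μ :=
    integrable_finsetSum _ fun i _ => ((h i).integrable_exp_mul t).const_mul w
  have hmeas : AEStronglyMeasurable (fun ω => w * ∑ i, X i ω) μ :=
    (Finset.aestronglyMeasurable_fun_sum _ fun i _ => (h i).aestronglyMeasurable).const_mul w
  have hint_avg (t : ℝ) : Integrable (fun ω => exp (t * (w * ∑ i, X i ω))) μ :=
    (hint t).mono' (by fun_prop) (ae_of_all _ fun ω => by
      rw [Real.norm_of_nonneg (exp_pos _).le]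
      exact hjensen t ω)
  refine ⟨hint_avg, fun t => ?_⟩
  calc mgf (fun ω => w * ∑ i, X i ω) μ t ≤ ∫ ω, ∑ i, w * exp (t * X i ω) ∂μ :=
        integral_mono (hint_avg t) (hint t) (hjensen t)
    _ = ∑ i, w * mgf (X i) μ t := by
        rw [integral_finsetSum _ fun i _ => ((h i).integrable_exp_mul t).const_mul w]
        simp only [integral_const_mul, mgf]
    _ ≤ ∑ _i : ι, w * exp (c * t ^ 2 / 2) :=
        Finset.sum_le_sum fun i _ => mul_le_mul_of_nonneg_left ((h i).mgf_le t) (by positivity)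
    _ = exp (c * t ^ 2 / 2) := by rw [← Finset.sum_mul, hw, one_mul]

theorem average_of_iIndepFun {ι : Type*} [Fintype ι] {X : ι → Ω → ℝ} (hind : iIndepFun X μ)
    (h : ∀ i, HasSubgaussianMGF (X i) c μ) :
    HasSubgaussianMGF (fun ω => (Fintype.card ι : ℝ)⁻¹ * ∑ i, X i ω)
      (c / Fintype.card ι) μ := by
  have hc : c / Fintype.card ι =
      ⟨(Fintype.card ι : ℝ)⁻¹ ^ 2, sq_nonneg _⟩ * (∑ _i : ι, c : NNReal) := by
    refine NNReal.eq ?_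
    change (c : ℝ) / Fintype.card ι = (Fintype.card ι : ℝ)⁻¹ ^ 2 * ((∑ _i : ι, c : NNReal) : ℝ)
    push_cast
    simp only [Finset.sum_const, Finset.card_univ, nsmul_eq_mul]
    obtain h0 | h0 := eq_or_ne (Fintype.card ι : ℝ) 0
    · simp [h0]
    · field_simp
  rw [hc]
  exact (sum_of_iIndepFun hind fun i _ => h i).const_mul _

theorem measure_abs_ge_le [IsFiniteMeasure μ] {X : Ω → ℝ} (h : HasSubgaussianMGF X c μ) {ε : ℝ}
    (hε : 0 ≤ ε) : μ {ω | ε ≤ |X ω|} ≤ ENNReal.ofReal (2 * exp (-ε ^ 2 / (2 * c))) := by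
  calc μ {ω | ε ≤ |X ω|} ≤ μ ({ω | ε ≤ X ω} ∪ {ω | ε ≤ (-X) ω}) :=
        measure_mono fun ω (hω : ε ≤ |X ω|) => show ε ≤ X ω ∨ ε ≤ -X ω from le_abs.mp hω
    _ ≤ μ {ω | ε ≤ X ω} + μ {ω | ε ≤ (-X) ω} := measure_union_le _ _
    _ = ENNReal.ofReal (μ.real {ω | ε ≤ X ω}) + ENNReal.ofReal (μ.real {ω | ε ≤ (-X) ω}) := by
        rw [ofReal_measureReal, ofReal_measureReal]
    _ ≤ ENNReal.ofReal (exp (-ε ^ 2 / (2 * c))) + ENNReal.ofReal (exp (-ε ^ 2 / (2 * c))) :=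
        add_le_add (ENNReal.ofReal_le_ofReal (h.measure_ge_le hε))
          (ENNReal.ofReal_le_ofReal (h.neg.measure_ge_le hε))
    _ = ENNReal.ofReal (2 * exp (-ε ^ 2 / (2 * c))) := by
        rw [← ENNReal.ofReal_add (by positivity) (by positivity), ← two_mul]

end HasSubgaussianMGF

theorem hasSubgaussianMGF_of_abs_le [IsProbabilityMeasure μ] {X : Ω → ℝ} {C : ℝ}
    (hX : AEMeasurable X μ) (hC : ∀ᵐ ω ∂μ, |X ω| ≤ C) :
    HasSubgaussianMGF (fun ω => X ω - μ[X]) (‖C‖₊ ^ 2) μ := by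
  have hc : (‖C - -C‖₊ / 2) ^ 2 = ‖C‖₊ ^ 2 := by
    rw [sub_neg_eq_add, ← two_mul, nnnorm_mul]
    simp
  rw [← hc]
  exact hasSubgaussianMGF_of_mem_Icc hX (hC.mono fun ω hω => abs_le.mp hω)

end ProbabilityTheory

theorem ustat_hoeffding_two_sided_general
    {Ω : Type*} [MeasureSpace Ω] [IsProbabilityMeasure (ℙ : Measure Ω)]
    {𝒳 : Type*} [MeasurableSpace 𝒳] {m n : ℕ} (hmn : m ≤ n)
    (X : Fin n → Ω → 𝒳) (hXmeas : ∀ i, Measurable (X i))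
    (hIndep : iIndepFun X ℙ)
    (hid : ∀ i j, IdentDistrib (X i) (X j) ℙ ℙ)
    (h : (Fin m → 𝒳) → ℝ) (hhmeas : Measurable h)
    (C : ℝ) (hC : ∀ x, |h x| ≤ C)
    (mh : ℝ) (hmh : mh = ∫ ω, h (fun j => X (Fin.castLE hmn j) ω) ∂ℙ)
    (t : ℝ) (ht : 0 < t) :
    ℙ {ω | t ≤ |Ustat h (fun i => X i ω) - mh|} ≤
      ENNReal.ofReal (2 * Real.exp (-(t ^ 2 * ((n / m : ℕ) : ℝ)) / (2 * C ^ 2))) := by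
  obtain hk | hk := Nat.eq_zero_or_pos (n / m)
  · calc ℙ _ ≤ 1 := prob_le_one
      _ ≤ _ := by simp [hk]
  let J : Fin (n / m) × Fin m ↪ Fin n :=
    finProdFinEquiv.toEmbedding.trans (Fin.castLEEmb (Nat.div_mul_le_self n m))
  have hblock (σ : Equiv.Perm (Fin n)) (i : Fin (n / m)) :
      HasSubgaussianMGF (fun ω => h (fun j => X (σ (J (i, j))) ω) - mh) (‖C‖₊ ^ 2) ℙ := by
    have hmean : ∫ ω, h (fun j => X (σ (J (i, j))) ω) ∂ℙ = mh :=
      hmh ▸ ((hIndep.identDistrib_precomp hXmeas hid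
        (σ.injective.comp (J.injective.comp (Prod.mk_right_injective i)))
        (Fin.castLE_injective hmn)).comp hhmeas).integral_eq
    exact hmean ▸ hasSubgaussianMGF_of_abs_le (by fun_prop) (ae_of_all _ fun ω => hC _)
  have hindep (σ : Equiv.Perm (Fin n)) :
      iIndepFun (fun i ω => h (fun j => X (σ (J (i, j))) ω) - mh) ℙ :=
    (iIndepFun.curry (fun _ => hXmeas _) (hIndep.precomp (σ.injective.comp J.injective))).comp
      (fun _ y => h y - mh) fun _ => hhmeas.sub_const mh
  have hU : HasSubgaussianMGF (fun ω => Ustat h (fun i => X i ω) - mh)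
      (‖C‖₊ ^ 2 / (n / m : ℕ)) ℙ := by
    have hV := HasSubgaussianMGF.average fun σ =>
      HasSubgaussianMGF.average_of_iIndepFun (hindep σ) (hblock σ)
    simp only [Fintype.card_perm, Fintype.card_fin] at hV
    exact hV.congr (ae_of_all _ fun ω =>
      (ustat_sub_eq_average_perm_blocks hk.ne' J h (fun i => X i ω) mh).symm)
  refine (hU.measure_abs_ge_le ht.le).trans_eq ?_
  push_cast
  rw [Real.norm_eq_abs, sq_abs, mul_div_assoc', div_div_eq_mul_div, neg_mul]

theorem ustat_hoeffding_two_sided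
    {Ω : Type*} [MeasureSpace Ω] [IsProbabilityMeasure (ℙ : Measure Ω)]
    {𝒳 : Type*} [MeasurableSpace 𝒳] {m n : ℕ} (hm : 2 ≤ m) (hmn : m ≤ n)
    (X : Fin n → Ω → 𝒳) (hXmeas : ∀ i, Measurable (X i))
    (hIndep : iIndepFun X ℙ)
    (hid : ∀ i j, IdentDistrib (X i) (X j) ℙ ℙ)
    (h : (Fin m → 𝒳) → ℝ) (hhmeas : Measurable h)
    (C : ℝ) (hC : ∀ x, |h x| ≤ C)
    (mh : ℝ) (hmh : mh = ∫ ω, h (fun j => X (Fin.castLE hmn j) ω) ∂ℙ)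
    (t : ℝ) (ht : 0 < t) :
    ℙ {ω | t ≤ |Ustat h (fun i => X i ω) - mh|} ≤
      ENNReal.ofReal (2 * Real.exp (-(t ^ 2 * ((n / m : ℕ) : ℝ)) / (2 * C ^ 2))) :=
  ustat_hoeffding_two_sided_general hmn X hXmeas hIndep hid h hhmeas C hC mh hmh t ht
end

section
/- (Hoeffding's Inequality) Let $X_1,\ldots,X_n$ be independent real-valued random variables such that $E(X_i)=\mu$ for all $i$ and $X_i\in[a,b]$ almost surely. Let $\bar{X}_n=\frac{1}{n}\sum_{i=1}^n X_i$. Then for any $\epsilon>0$, $P(|\bar{X}_n-\mu|\geq\epsilon)\leq 2e^{-2n\epsilon^2/(b-a)^2}$. -/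
/-!
By Hoeffding's lemma each centred variable `X i - μ` is sub-Gaussian with variance proxy
`((b - a) / 2) ^ 2`; by independence the proxies of a sum add up, so `∑ (X i - μ)` has proxy
`n (b - a)² / 4`. The Chernoff bound for this sum and for its negation bounds each tail of
`|∑ (X i - μ)| ≥ n ε` by `exp (-2 n ε² / (b - a)²)`.
-/

open MeasureTheory ProbabilityTheory Real

open scoped NNReal

namespace ProbabilityTheory

variable {Ω : Type*} {mΩ : MeasurableSpace Ω} {μ : Measure Ω}

lemma HasSubgaussianMGF.measureReal_abs_ge_le [IsFiniteMeasure μ] {X : Ω → ℝ} {c : ℝ≥0}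
    (h : HasSubgaussianMGF X c μ) {ε : ℝ} (hε : 0 ≤ ε) :
    μ.real {ω | ε ≤ |X ω|} ≤ 2 * exp (-ε ^ 2 / (2 * c)) := by
  have h_split : {ω | ε ≤ |X ω|} ⊆ {ω | ε ≤ X ω} ∪ {ω | ε ≤ (-X) ω} := fun _ hω ↦ by
    simpa [le_abs] using hω
  calc μ.real {ω | ε ≤ |X ω|}
      ≤ μ.real {ω | ε ≤ X ω} + μ.real {ω | ε ≤ (-X) ω} :=
        (measureReal_mono h_split).trans (measureReal_union_le _ _)
    _ ≤ exp (-ε ^ 2 / (2 * c)) + exp (-ε ^ 2 / (2 * c)) :=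
        add_le_add (h.measure_ge_le hε) (h.neg.measure_ge_le hε)
    _ = 2 * exp (-ε ^ 2 / (2 * c)) := by ring

lemma hasSubgaussianMGF_sum_sub_integral_of_mem_Icc {ι : Type*} {X : ι → Ω → ℝ}
    (h_indep : iIndepFun X μ) (h_meas : ∀ i, AEMeasurable (X i) μ) {a b : ℝ}
    (h_bdd : ∀ i, ∀ᵐ ω ∂μ, X i ω ∈ Set.Icc a b) (s : Finset ι) :
    HasSubgaussianMGF (fun ω ↦ ∑ i ∈ s, (X i ω - μ[X i])) (s.card * (‖b - a‖₊ / 2) ^ 2) μ := by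
  have := h_indep.isProbabilityMeasure
  have h_indep' : iIndepFun (fun i ω ↦ X i ω - μ[X i]) μ :=
    h_indep.comp (fun i y ↦ y - ∫ ω, X i ω ∂μ) fun _ ↦ measurable_id.sub_const _
  simpa using HasSubgaussianMGF.sum_of_iIndepFun h_indep' fun i _ ↦
    hasSubgaussianMGF_of_mem_Icc (h_meas i) (h_bdd i)

lemma measureReal_abs_sum_sub_integral_ge_le {ι : Type*} {X : ι → Ω → ℝ}
    (h_indep : iIndepFun X μ) (h_meas : ∀ i, AEMeasurable (X i) μ) {a b : ℝ}
    (h_bdd : ∀ i, ∀ᵐ ω ∂μ, X i ω ∈ Set.Icc a b) (s : Finset ι) {ε : ℝ} (hε : 0 ≤ ε) :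
    μ.real {ω | ε ≤ |∑ i ∈ s, (X i ω - μ[X i])|}
      ≤ 2 * exp (-2 * ε ^ 2 / (s.card * (b - a) ^ 2)) := by
  have := h_indep.isProbabilityMeasure
  refine ((hasSubgaussianMGF_sum_sub_integral_of_mem_Icc h_indep h_meas h_bdd s)
    |>.measureReal_abs_ge_le hε).trans_eq ?_
  have h_var : 2 * ((s.card * (‖b - a‖₊ / 2) ^ 2 : ℝ≥0) : ℝ) = s.card * (b - a) ^ 2 / 2 := by
    push_cast
    rw [Real.norm_eq_abs, div_pow, sq_abs]
    ring
  rw [h_var, div_div_eq_mul_div, mul_comm _ (2 : ℝ), mul_neg, neg_mul]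

end ProbabilityTheory

theorem hoeffding_inequality
    {Ω : Type*} [MeasureSpace Ω] [IsProbabilityMeasure (ℙ : Measure Ω)]
    {n : ℕ} (X : Fin n → Ω → ℝ) (hXmeas : ∀ i, Measurable (X i))
    (hIndep : iIndepFun X ℙ)
    (a b μ : ℝ) (hab : ∀ i, ∀ᵐ ω, X i ω ∈ Set.Icc a b)
    (hmean : ∀ i, ∫ ω, X i ω = μ)
    (ε : ℝ) (hε : 0 < ε) :
    ℙ {ω | ε ≤ |(∑ i, X i ω) / n - μ|} ≤
      ENNReal.ofReal (2 * Real.exp (-2 * n * ε ^ 2 / (b - a) ^ 2)) := by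
  rcases Nat.eq_zero_or_pos n with rfl | hn
  · simpa using prob_le_one.trans (ENNReal.one_le_ofReal.2 one_le_two)
  have hn' : (0 : ℝ) < n := Nat.cast_pos.2 hn
  have h_event : {ω | ε ≤ |(∑ i, X i ω) / n - μ|}
      = {ω | n * ε ≤ |∑ i, (X i ω - ∫ ω', X i ω')|} := by
    ext ω
    simp only [hmean, Finset.sum_sub_distrib, Finset.sum_const, Finset.card_univ,
      Fintype.card_fin, nsmul_eq_mul, Set.mem_ofPred_eq]
    rw [← le_div_iff₀' hn', ← abs_of_pos hn', ← abs_div, abs_of_pos hn', sub_div,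
      mul_div_cancel_left₀ _ hn'.ne']
  rw [h_event, ← ENNReal.ofReal_toReal (measure_ne_top ℙ _)]
  refine ENNReal.ofReal_le_ofReal ((measureReal_abs_sum_sub_integral_ge_le hIndep
    (fun i ↦ (hXmeas i).aemeasurable) hab Finset.univ (by positivity)).trans_eq ?_)
  rw [Finset.card_univ, Fintype.card_fin]
  congr 2
  field_simp
end
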